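/- The set of rational numbers of the form min over all pairs i<j in {1,2,3,4} of the values (x₁+x₂+x₃+x₄)/3, (x₁+x₂+x₃+x₄-x_i)/2, and x_k+x_l (where {k,l} = complement of {i,j}), as (x₁,x₂,x₃,x₄) ranges over ℤ⁴_{>0}, contains 4/3 and 3/2 but does not contain 5/3. -/
import Mathlib


/-- The minimum of the eleven facet functionals of the Newton polyhedron of the
ideal `(∏_{j≠i} x_j : i = 1,…,4)`: `Σx_k/3`, the four `Σ_{k≠i}x_k/2`, and the six
pairwise sums `x_k + x_l`. -/
def val₁₀ (a b c d : ℚ) : ℚ :=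
  min ((a + b + c + d) / 3) (min ((b + c + d) / 2) (min ((a + c + d) / 2)
    (min ((a + b + d) / 2) (min ((a + b + c) / 2)
    (min (a + b) (min (a + c) (min (a + d) (min (b + c) (min (b + d) (c + d))))))))))

/-- The set of such minima over quadruples of positive integers. -/
def S₁₀ : Set ℚ :=
  {q : ℚ | ∃ a b c d : ℤ, 0 < a ∧ 0 < b ∧ 0 < c ∧ 0 < d ∧
    q = val₁₀ (a : ℚ) (b : ℚ) (c : ℚ) (d : ℚ)}

theorem stmt_10 : (4/3 : ℚ) ∈ S₁₀ ∧ (3/2 : ℚ) ∈ S₁₀ ∧ (5/3 : ℚ) ∉ S₁₀ := by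
  refine ⟨⟨1, 1, 1, 1, by norm_num, by norm_num, by norm_num, by norm_num, by
      norm_num [val₁₀]⟩,
    ⟨1, 1, 1, 2, by norm_num, by norm_num, by norm_num, by norm_num, by
      norm_num [val₁₀]⟩, ?_⟩
  rintro ⟨a, b, c, d, ha, hb, hc, hd, heq⟩
  have h := heq.le
  simp only [val₁₀, le_min_iff] at h
  obtain ⟨h0, h1, h2, h3, h4, h5, h6, h7, h8, h9, h10⟩ := h
  -- each triple sum is ≥ 4 as an integer
  have t1 : (4 : ℤ) ≤ b + c + d := by
    have : (3 : ℚ) < ((b : ℚ) + c + d) := by linarith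
    have : (3 : ℤ) < b + c + d := by exact_mod_cast this
    omega
  have t2 : (4 : ℤ) ≤ a + c + d := by
    have : (3 : ℚ) < ((a : ℚ) + c + d) := by linarith
    have : (3 : ℤ) < a + c + d := by exact_mod_cast this
    omega
  have t3 : (4 : ℤ) ≤ a + b + d := by
    have : (3 : ℚ) < ((a : ℚ) + b + d) := by linarith
    have : (3 : ℤ) < a + b + d := by exact_mod_cast this
    omega
  have t4 : (4 : ℤ) ≤ a + b + c := by
    have : (3 : ℚ) < ((a : ℚ) + b + c) := by linarith
    have : (3 : ℤ) < a + b + c := by exact_mod_cast this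
    omega
  have hs : (6 : ℤ) ≤ a + b + c + d := by omega
  have hsQ : (6 : ℚ) ≤ (a : ℚ) + b + c + d := by exact_mod_cast hs
  have t1Q : (4 : ℚ) ≤ (b : ℚ) + c + d := by exact_mod_cast t1
  -- so (a+b+c+d)/3 ≥ 2 and (b+c+d)/2 ≥ 2, but min = 5/3 < 2, so the min
  -- must be attained elsewhere; in fact every term is ≥ 2, contradiction.
  have hmin : (5 / 3 : ℚ) = min (((a : ℚ) + b + c + d) / 3) (min (((b : ℚ) + c + d) / 2)
      (min (((a : ℚ) + c + d) / 2) (min (((a : ℚ) + b + d) / 2)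
      (min (((a : ℚ) + b + c) / 2) (min ((a : ℚ) + b) (min ((a : ℚ) + c)
      (min ((a : ℚ) + d) (min ((b : ℚ) + c) (min ((b : ℚ) + d) ((c : ℚ) + d)))))))))) := heq
  have p5 : (2 : ℚ) ≤ (a : ℚ) + b := by
    have : (1 : ℤ) < a + b := by
      have : (1 : ℚ) < (a : ℚ) + b := by linarith
      exact_mod_cast this
    exact_mod_cast this
  have p6 : (2 : ℚ) ≤ (a : ℚ) + c := by
    have : (1 : ℤ) < a + c := by
      have : (1 : ℚ) < (a : ℚ) + c := by linarith
      exact_mod_cast this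
    exact_mod_cast this
  have p7 : (2 : ℚ) ≤ (a : ℚ) + d := by
    have : (1 : ℤ) < a + d := by
      have : (1 : ℚ) < (a : ℚ) + d := by linarith
      exact_mod_cast this
    exact_mod_cast this
  have p8 : (2 : ℚ) ≤ (b : ℚ) + c := by
    have : (1 : ℤ) < b + c := by
      have : (1 : ℚ) < (b : ℚ) + c := by linarith
      exact_mod_cast this
    exact_mod_cast this
  have p9 : (2 : ℚ) ≤ (b : ℚ) + d := by
    have : (1 : ℤ) < b + d := by
      have : (1 : ℚ) < (b : ℚ) + d := by linarith
      exact_mod_cast this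
    exact_mod_cast this
  have p10 : (2 : ℚ) ≤ (c : ℚ) + d := by
    have : (1 : ℤ) < c + d := by
      have : (1 : ℚ) < (c : ℚ) + d := by linarith
      exact_mod_cast this
    exact_mod_cast this
  have t1Q' : (2 : ℚ) ≤ ((b : ℚ) + c + d) / 2 := by linarith
  have t2Q : (2 : ℚ) ≤ ((a : ℚ) + c + d) / 2 := by
    have : (4 : ℚ) ≤ (a : ℚ) + c + d := by exact_mod_cast t2
    linarith
  have t3Q : (2 : ℚ) ≤ ((a : ℚ) + b + d) / 2 := by
    have : (4 : ℚ) ≤ (a : ℚ) + b + d := by exact_mod_cast t3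
    linarith
  have t4Q : (2 : ℚ) ≤ ((a : ℚ) + b + c) / 2 := by
    have : (4 : ℚ) ≤ (a : ℚ) + b + c := by exact_mod_cast t4
    linarith
  have hsQ' : (2 : ℚ) ≤ ((a : ℚ) + b + c + d) / 3 := by linarith
  have : (2 : ℚ) ≤ (5 / 3 : ℚ) := by
    rw [hmin]
    simp only [le_min_iff]
    exact ⟨hsQ', t1Q', t2Q, t3Q, t4Q, p5, p6, p7, p8, p9, p10⟩
  norm_num at this
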